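/- Let n ≥ 1 and let Ψ be a local symplectomorphism of ω₀ on ℝ^{2n} such that p₁∘Ψ = p₁ on a neighbourhood of 0. Then there exist a smooth function germ A and a smooth map germ B = (B₁,…,B_{2n−2}), both independent of the variable q₁ (i.e. functions of the variables (p₁,…,pₙ,q₂,…,qₙ) only), such that on a neighbourhood of 0, Ψ(p,q) = (p₁, q₁ + A, B), where q₁∘Ψ = q₁ + A and the components of B are the components (p₂∘Ψ, q₂∘Ψ, …, pₙ∘Ψ, qₙ∘Ψ) of Ψ. -/

import Mathlib

open Filter Topology

noncomputable section

/-- `ℝ^{2n}` with coordinates `(p, q) = (p₁,…,pₙ,q₁,…,qₙ)`. -/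
abbrev PQ (n : ℕ) : Type := (Fin n → ℝ) × (Fin n → ℝ)

/-- A smooth germ at `0`: a function which is `C^∞` on some neighbourhood of `0`. -/
def SmoothGerm {E F : Type*} [NormedAddCommGroup E] [NormedSpace ℝ E]
    [NormedAddCommGroup F] [NormedSpace ℝ F] (f : E → F) : Prop :=
  ∃ U ∈ 𝓝 (0 : E), ContDiffOn ℝ (⊤ : ℕ∞) f U

/-- The standard symplectic form `ω₀ = Σᵢ dpᵢ∧dqᵢ` on `ℝ^{2n}` as a constant
alternating bilinear form. -/
def omega0 (n : ℕ) (u v : PQ n) : ℝ := ∑ i : Fin n, (u.1 i * v.2 i - u.2 i * v.1 i)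

/-- A local symplectomorphism of `ω₀`: `Ψ(0) = 0`, smooth near `0`, invertible
derivative, and `DΨ(z)` preserves `ω₀` for all `z` near `0`. -/
def IsLocalSymp (n : ℕ) (Ψ : PQ n → PQ n) : Prop :=
  Ψ 0 = 0 ∧ SmoothGerm Ψ ∧ Function.Bijective ⇑(fderiv ℝ Ψ 0) ∧
    ∀ᶠ z in 𝓝 (0 : PQ n), ∀ u v : PQ n,
      omega0 n (fderiv ℝ Ψ z u) (fderiv ℝ Ψ z v) = omega0 n u v

/-- The `j`-th generator (0-indexed) of the list `q₁,p₁,q₂,p₂,…,qₙ,pₙ`. -/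
def genFun (n j : ℕ) (z : PQ n) : ℝ :=
  if h : j / 2 < n then (if j % 2 = 0 then z.2 ⟨j / 2, h⟩ else z.1 ⟨j / 2, h⟩) else 0

/-- Membership (as germs at `0`) in the ideal `I_k` generated by the first `k`
functions of the list `q₁,p₁,q₂,p₂,…,qₙ,pₙ`. -/
def InIdeal (n k : ℕ) (g : PQ n → ℝ) : Prop :=
  ∃ c : Fin k → (PQ n → ℝ), (∀ j, SmoothGerm (c j)) ∧
    ∀ᶠ z in 𝓝 (0 : PQ n), g z = ∑ j : Fin k, c j z * genFun n j.1 z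

/-! Since `ω₀(w, ∂/∂q₁) = p₁(w)`, a linear map preserving `ω₀` and the coordinate `p₁` fixes
`∂/∂q₁`: for `w = Lu` (a map preserving `ω₀` is injective, hence onto),
`ω₀(w, L ∂/∂q₁) = ω₀(u, ∂/∂q₁) = p₁(u) = p₁(w) = ω₀(w, ∂/∂q₁)`, and `ω₀` is nondegenerate.
So near `0` every `DΨ(z)` fixes `∂/∂q₁`, and on a ball `Ψ` is a translation along each
`q₁`-line: `Ψ(p, q) = Ψ(p, q)|_{q₁ = 0} + q₁ ∂/∂q₁`. Restricting `Ψ` to `{q₁ = 0}` gives `A`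
and `B`.
-/

section Calculus

variable {E F : Type*} [NormedAddCommGroup E] [NormedSpace ℝ E]
  [NormedAddCommGroup F] [NormedSpace ℝ F]

theorem Convex.add_smul_eq_of_fderiv_apply_eq {s : Set E} (hs : IsOpen s) (hconv : Convex ℝ s)
    {f : E → F} {v : E} {w : F} (hf : ∀ z ∈ s, DifferentiableAt ℝ f z)
    (hv : ∀ z ∈ s, fderiv ℝ f z v = w) {x : E} {t : ℝ} (hx : x ∈ s) (ht : x + t • v ∈ s) :
    f (x + t • v) = f x + t • w := by
  set T : Set ℝ := {τ | x + τ • v ∈ s}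
  have hT_open : IsOpen T := hs.preimage (by fun_prop)
  have hT_conv : Convex ℝ T := by
    have hT : T = AffineMap.lineMap x (x + v) ⁻¹' s := by
      ext τ
      simp [T, AffineMap.lineMap_apply_module', add_comm]
    exact hT ▸ hconv.affine_preimage _
  have hderiv : ∀ τ ∈ T, HasDerivAt (fun τ : ℝ => f (x + τ • v) - τ • w) 0 τ := by
    intro τ hτ
    have hline : HasDerivAt (fun τ : ℝ => x + τ • v) v τ := by
      simpa using ((hasDerivAt_id τ).smul_const v).const_add x
    have hfline := (hf _ hτ).hasFDerivAt.comp_hasDerivAt τ hline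
    rw [hv _ hτ] at hfline
    have hdiff := hfline.sub ((hasDerivAt_id' τ).smul_const w)
    rwa [one_smul, sub_self] at hdiff
  have hconst := hT_open.is_const_of_deriv_eq_zero hT_conv.isPreconnected
    (fun τ hτ => (hderiv τ hτ).differentiableAt.differentiableWithinAt)
    (fun τ hτ => (hderiv τ hτ).deriv) (show t ∈ T from ht) (show (0 : ℝ) ∈ T by simpa [T])
  simpa [sub_eq_iff_eq_add] using hconst

theorem ContinuousLinearMap.comp_fderiv_eq_of_eventuallyEq (L : E →L[ℝ] F) {f : E → E} {z : E}
    (hf : DifferentiableAt ℝ f z) (h : (fun y => L (f y)) =ᶠ[𝓝 z] L) :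
    L.comp (fderiv ℝ f z) = L :=
  (L.hasFDerivAt.comp z hf.hasFDerivAt).fderiv.symm.trans (h.fderiv_eq.trans L.fderiv)

end Calculus

theorem norm_update_zero_le {ι E : Type*} [Fintype ι] [DecidableEq ι] [SeminormedAddCommGroup E]
    (f : ι → E) (i : ι) : ‖Function.update f i 0‖ ≤ ‖f‖ := by
  refine pi_norm_le_iff_of_nonneg (norm_nonneg f) |>.mpr fun j => ?_
  rcases eq_or_ne j i with rfl | hj
  · simp
  · simpa [Function.update_of_ne hj] using norm_le_pi_norm f j

section SmoothGerm

variable {E F G : Type*} [NormedAddCommGroup E] [NormedSpace ℝ E]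
  [NormedAddCommGroup F] [NormedSpace ℝ F] [NormedAddCommGroup G] [NormedSpace ℝ G]

theorem SmoothGerm.eventually_differentiableAt {f : E → F} (hf : SmoothGerm f) :
    ∀ᶠ z in 𝓝 0, DifferentiableAt ℝ f z := by
  obtain ⟨U, hU, hfU⟩ := hf
  filter_upwards [eventually_mem_nhds_iff.mpr hU] with z hz
  exact (hfU.differentiableOn (by simp)).differentiableAt hz

theorem ContDiff.comp_smoothGerm {g : F → G} {f : E → F} (hg : ContDiff ℝ (⊤ : ℕ∞) g)
    (hf : SmoothGerm f) : SmoothGerm (fun x => g (f x)) := by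
  obtain ⟨U, hU, hfU⟩ := hf
  exact ⟨U, hU, hg.comp_contDiffOn hfU⟩

theorem SmoothGerm.comp_contDiff {f : F → G} {g : E → F} (hf : SmoothGerm f)
    (hg : ContDiff ℝ (⊤ : ℕ∞) g) (hg0 : g 0 = 0) : SmoothGerm (fun x => f (g x)) := by
  obtain ⟨U, hU, hfU⟩ := hf
  exact ⟨g ⁻¹' U, hg.continuous.continuousAt.preimage_mem_nhds (hg0 ▸ hU),
    hfU.comp hg.contDiffOn (Set.mapsTo_preimage g U)⟩

end SmoothGerm

def qUnit {n : ℕ} (i : Fin n) : PQ n := (0, Pi.single i 1)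

section Omega0

variable {n : ℕ}

theorem omega0_qUnit (w : PQ n) (i : Fin n) : omega0 n w (qUnit i) = w.1 i := by
  simp [omega0, qUnit, Pi.single_apply, mul_ite]

theorem omega0_sub_right (w u v : PQ n) :
    omega0 n w (u - v) = omega0 n w u - omega0 n w v := by
  simp only [omega0, ← Finset.sum_sub_distrib, Prod.fst_sub, Prod.snd_sub, Pi.sub_apply]
  exact Finset.sum_congr rfl fun i _ => by ring

theorem omega0_zero_right (u : PQ n) : omega0 n u 0 = 0 := by simp [omega0]

theorem eq_zero_of_forall_omega0_eq_zero {v : PQ n} (h : ∀ u, omega0 n u v = 0) : v = 0 := by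
  refine Prod.ext (funext fun i => ?_) (funext fun i => ?_)
  · simpa [omega0, Pi.single_apply, ite_mul] using h (0, Pi.single i 1)
  · simpa [omega0, Pi.single_apply, ite_mul] using h (Pi.single i 1, 0)

variable {L : PQ n →ₗ[ℝ] PQ n} (hL : ∀ u v, omega0 n (L u) (L v) = omega0 n u v)
include hL

theorem injective_of_preserves_omega0 : Function.Injective L := by
  refine (injective_iff_map_eq_zero L).mpr fun u hu => eq_zero_of_forall_omega0_eq_zero fun v => ?_
  rw [← hL, hu, omega0_zero_right]

theorem map_qUnit_of_preserves_omega0 {i : Fin n} (hp : ∀ u, (L u).1 i = u.1 i) :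
    L (qUnit i) = qUnit i := by
  have hsurj := LinearMap.injective_iff_surjective.mp (injective_of_preserves_omega0 hL)
  refine sub_eq_zero.mp (eq_zero_of_forall_omega0_eq_zero fun w => ?_)
  obtain ⟨u, rfl⟩ := hsurj w
  rw [omega0_sub_right, hL, omega0_qUnit, omega0_qUnit, hp, sub_self]

end Omega0

namespace IsLocalSymp

variable {n : ℕ} {Ψ : PQ n → PQ n} (hΨ : IsLocalSymp n Ψ) {i : Fin n}
  (hp : ∀ᶠ z in 𝓝 (0 : PQ n), (Ψ z).1 i = z.1 i)
include hΨ hp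

theorem eventually_fderiv_qUnit :
    ∀ᶠ z in 𝓝 (0 : PQ n), DifferentiableAt ℝ Ψ z ∧ fderiv ℝ Ψ z (qUnit i) = qUnit i := by
  filter_upwards [hΨ.2.1.eventually_differentiableAt, hΨ.2.2.2, hp.eventually_nhds]
    with z hdiff hω hpz
  refine ⟨hdiff, map_qUnit_of_preserves_omega0 (L := (fderiv ℝ Ψ z).toLinearMap) hω fun u => ?_⟩
  have hcomp := ((ContinuousLinearMap.proj i).comp
    (ContinuousLinearMap.fst ℝ (Fin n → ℝ) (Fin n → ℝ))).comp_fderiv_eq_of_eventuallyEq hdiff hpz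
  exact congr($hcomp u)

theorem eventually_eq_add_smul_qUnit :
    ∀ᶠ z in 𝓝 (0 : PQ n), Ψ z = Ψ (z.1, Function.update z.2 i 0) + z.2 i • qUnit i := by
  obtain ⟨r, hr, hball⟩ := Metric.eventually_nhds_iff_ball.mp (hΨ.eventually_fderiv_qUnit hp)
  filter_upwards [Metric.ball_mem_nhds 0 hr] with z hz
  have hline : (z.1, Function.update z.2 i 0) + z.2 i • qUnit i = z := by
    refine Prod.ext (by simp [qUnit]) (funext fun j => ?_)
    rcases eq_or_ne j i with rfl | hj
    · simp [qUnit]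
    · simp [qUnit, hj]
  have hbase : (z.1, Function.update z.2 i 0) ∈ Metric.ball (0 : PQ n) r := by
    rw [mem_ball_zero_iff] at hz ⊢
    exact lt_of_le_of_lt (max_le_max le_rfl (norm_update_zero_le z.2 i)) hz
  have := (convex_ball (0 : PQ n) r).add_smul_eq_of_fderiv_apply_eq Metric.isOpen_ball
    (fun y hy => (hball y hy).1) (fun y hy => (hball y hy).2) hbase (hline ▸ hz)
  rwa [hline] at this

end IsLocalSymp

def consQZero (n : ℕ) (w : (Fin (n + 1) → ℝ) × (Fin n → ℝ)) : PQ (n + 1) := (w.1, Fin.cons 0 w.2)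

theorem contDiff_consQZero (n : ℕ) : ContDiff ℝ (⊤ : ℕ∞) (consQZero n) := by
  refine contDiff_fst.prodMk (contDiff_pi.mpr fun j => Fin.cases ?_ (fun i => ?_) j)
  · simpa using contDiff_const
  · simp only [Fin.cons_succ]
    fun_prop

theorem consQZero_zero (n : ℕ) : consQZero n 0 = 0 := by
  refine Prod.ext rfl (funext fun j => Fin.cases ?_ (fun i => ?_) j) <;> simp [consQZero]

theorem consQZero_tail {n : ℕ} (z : PQ (n + 1)) :
    consQZero n (z.1, fun j => z.2 j.succ) = (z.1, Function.update z.2 0 0) := by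
  refine Prod.ext rfl (funext fun j => Fin.cases ?_ (fun i => ?_) j) <;> simp [consQZero]

/-- any local symplectomorphism of `ω₀` on `ℝ^{2(n+1)}` preserving
`p₁` has the form `(p,q) ↦ (p₁, q₁ + A, B)` where the germs `A` and
`B = (B₁,…,B_{2n})` do not depend on the variable `q₁`, i.e. they are functions of
`(p₁,…,p_{n+1}, q₂,…,q_{n+1})` only. -/
theorem symplecto_preserving_p1 (n : ℕ) (Ψ : PQ (n + 1) → PQ (n + 1))
    (hΨ : IsLocalSymp (n + 1) Ψ)
    (hp1 : ∀ᶠ z in 𝓝 (0 : PQ (n + 1)), (Ψ z).1 0 = z.1 0) :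
    ∃ (A : (Fin (n + 1) → ℝ) × (Fin n → ℝ) → ℝ)
      (Bp Bq : Fin n → ((Fin (n + 1) → ℝ) × (Fin n → ℝ) → ℝ)),
      SmoothGerm A ∧ (∀ i, SmoothGerm (Bp i)) ∧ (∀ i, SmoothGerm (Bq i)) ∧
      ∀ᶠ z in 𝓝 (0 : PQ (n + 1)),
        (Ψ z).1 0 = z.1 0 ∧
        (Ψ z).2 0 = z.2 0 + A (z.1, fun j => z.2 j.succ) ∧
        ∀ i : Fin n,
          (Ψ z).1 i.succ = Bp i (z.1, fun j => z.2 j.succ) ∧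
          (Ψ z).2 i.succ = Bq i (z.1, fun j => z.2 j.succ) := by
  have hΦ : SmoothGerm fun w => Ψ (consQZero n w) :=
    hΨ.2.1.comp_contDiff (contDiff_consQZero n) (consQZero_zero n)
  refine ⟨fun w => (Ψ (consQZero n w)).2 0, fun i w => (Ψ (consQZero n w)).1 i.succ,
    fun i w => (Ψ (consQZero n w)).2 i.succ, ?_, fun i => ?_, fun i => ?_, ?_⟩
  · exact ContDiff.comp_smoothGerm (g := fun y : PQ (n + 1) => y.2 0) (by fun_prop) hΦ
  · exact ContDiff.comp_smoothGerm (g := fun y : PQ (n + 1) => y.1 i.succ) (by fun_prop) hΦ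
  · exact ContDiff.comp_smoothGerm (g := fun y : PQ (n + 1) => y.2 i.succ) (by fun_prop) hΦ
  filter_upwards [hp1, hΨ.eventually_eq_add_smul_qUnit hp1] with z hpz hz
  rw [← consQZero_tail] at hz
  refine ⟨hpz, ?_, fun i => ⟨?_, ?_⟩⟩ <;> rw [hz] <;> simp [qUnit, add_comm]
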